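/- Let (X_j)_{j ≥ 1} be real random variables on (Σ, μ) such that |X_j| ≤ M for all j, ∫_Σ X_j dμ = 0 for all j, and |∫_Σ X_i X_j dμ| ≤ C₀ r₀^{j−i} for all 1 ≤ i ≤ j, for some constants M, C₀ > 0 and r₀ ∈ (0,1). Set S_n = Σ_{j=1}^{n} X_j and σ_n² = ∫_Σ S_n² dμ, and assume σ_n² ≥ σ_-² n for some σ_- > 0 and all large n. Fix τ ∈ (0,1) and, for each n, set p = ⌊n^τ⌋, q = ⌈(log n)²⌉, k = ⌊n/(p+q)⌋, and ξ_j = Σ_{m = jp+jq+1}^{(j+1)p+jq} X_m for 0 ≤ j ≤ k−1. Then (Σ_{j=0}^{k−1} ∫_Σ ξ_j² dμ) / σ_n² → 1 as n → ∞. -/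

import Mathlib

/-!
With `c a b = ∫ X_a X_b dμ`, both `σ_n² = ∑_{a,b ≤ n} c a b` and `∑_j ∫ ξ_j² dμ` are sums of
`c` over sets of pairs, the latter over the diagonal squares `B_j × B_j` of the blocks. A pair
`(a, b) ∈ [1, n]²` outside these squares either has a coordinate in the gaps, which have
`n - k p = o(n)` points, or lies in two different blocks, so that `|a - b| ≥ q`. Since
`∑_b r₀^{|a-b|} ≤ 2 / (1 - r₀)` and `∑_{|a-b| ≥ q} r₀^{|a-b|} ≤ 2 r₀^q / (1 - r₀)`, the two
sums differ by `O(n - k p + n r₀^q) = o(n)`, whereas `σ_n² ≥ σ_-² n`.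
-/

open MeasureTheory Filter Topology
open scoped ENNReal BoundedContinuousFunction

noncomputable section

/-- Two-sided binary sequence space `Σ = {0,1}^ℤ`. -/
abbrev Seq2 : Type := ℤ → Bool

/-- One-sided binary sequence space `Σ⁺ = {0,1}^ℕ`. -/
abbrev Seq1 : Type := ℕ → Bool

/-- The shift map on two-sided sequences, `(σω)_k = ω_{k+1}`. -/
def shift2 (ω : Seq2) : Seq2 := fun k => ω (k + 1)

/-- The shift map on one-sided sequences, `(σω)_k = ω_{k+1}`. -/
def shift1 (ω : Seq1) : Seq1 := fun k => ω (k + 1)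

/-- Two two-sided sequences agree on all indices `|i| < N`. -/
def Agree2 (N : ℕ) (ω ω' : Seq2) : Prop := ∀ i : ℤ, |i| < (N : ℤ) → ω i = ω' i

/-- Two one-sided sequences agree on all indices `i < N`. -/
def Agree1 (N : ℕ) (ω ω' : Seq1) : Prop := ∀ i : ℕ, i < N → ω i = ω' i

/-- `N`-th variation of a function on the two-sided shift space. -/
def var2 {E : Type*} [SeminormedAddCommGroup E] (f : Seq2 → E) (N : ℕ) : ℝ≥0∞ :=
  ⨆ (ω : Seq2) (ω' : Seq2) (_ : Agree2 N ω ω'), (‖f ω - f ω'‖₊ : ℝ≥0∞)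

/-- `N`-th variation of a function on the one-sided shift space. -/
def var1 {E : Type*} [SeminormedAddCommGroup E] (f : Seq1 → E) (N : ℕ) : ℝ≥0∞ :=
  ⨆ (ω : Seq1) (ω' : Seq1) (_ : Agree1 N ω ω'), (‖f ω - f ω'‖₊ : ℝ≥0∞)

/-- Hölder seminorm `|f|_θ = sup_{N ≥ 1} θ^{-N} var_N f` (two-sided). -/
def hSemi2 {E : Type*} [SeminormedAddCommGroup E] (θ : ℝ) (f : Seq2 → E) : ℝ≥0∞ :=
  ⨆ (N : ℕ) (_ : 1 ≤ N), (ENNReal.ofReal θ)⁻¹ ^ N * var2 f N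

/-- Hölder seminorm `|f|_θ = sup_{N ≥ 1} θ^{-N} var_N f` (one-sided). -/
def hSemi1 {E : Type*} [SeminormedAddCommGroup E] (θ : ℝ) (f : Seq1 → E) : ℝ≥0∞ :=
  ⨆ (N : ℕ) (_ : 1 ≤ N), (ENNReal.ofReal θ)⁻¹ ^ N * var1 f N

/-- Sup norm (two-sided). -/
def supNorm2 {E : Type*} [SeminormedAddCommGroup E] (f : Seq2 → E) : ℝ≥0∞ :=
  ⨆ ω : Seq2, (‖f ω‖₊ : ℝ≥0∞)

/-- Sup norm (one-sided). -/
def supNorm1 {E : Type*} [SeminormedAddCommGroup E] (f : Seq1 → E) : ℝ≥0∞ :=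
  ⨆ ω : Seq1, (‖f ω‖₊ : ℝ≥0∞)

/-- Hölder norm `‖f‖_θ = sup|f| + |f|_θ` (two-sided). -/
def hNorm2 {E : Type*} [SeminormedAddCommGroup E] (θ : ℝ) (f : Seq2 → E) : ℝ≥0∞ :=
  supNorm2 f + hSemi2 θ f

/-- Hölder norm `‖f‖_θ = sup|f| + |f|_θ` (one-sided). -/
def hNorm1 {E : Type*} [SeminormedAddCommGroup E] (θ : ℝ) (f : Seq1 → E) : ℝ≥0∞ :=
  supNorm1 f + hSemi1 θ f

/-- `f` is `θ`-Hölder (two-sided). -/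
def IsHolder2 {E : Type*} [SeminormedAddCommGroup E] (θ : ℝ) (f : Seq2 → E) : Prop :=
  hNorm2 θ f < ⊤

/-- `f` is `θ`-Hölder (one-sided). -/
def IsHolder1 {E : Type*} [SeminormedAddCommGroup E] (θ : ℝ) (f : Seq1 → E) : Prop :=
  hNorm1 θ f < ⊤

/-- `μ` is the Bernoulli (1/2, 1/2) product measure on `{0,1}^ℤ`: it is a probability
measure giving each cylinder determined by finitely many coordinates its natural mass. -/
def IsBernoulli2 (μ : Measure Seq2) : Prop :=
  IsProbabilityMeasure μ ∧
    ∀ (s : Finset ℤ) (x : ℤ → Bool),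
      μ {ω : Seq2 | ∀ i ∈ s, ω i = x i} = (1 / 2 : ℝ≥0∞) ^ s.card

/-- `μ` is the Bernoulli (1/2, 1/2) product measure on `{0,1}^ℕ`. -/
def IsBernoulli1 (μ : Measure Seq1) : Prop :=
  IsProbabilityMeasure μ ∧
    ∀ (s : Finset ℕ) (x : ℕ → Bool),
      μ {ω : Seq1 | ∀ i ∈ s, ω i = x i} = (1 / 2 : ℝ≥0∞) ^ s.card

/-- Birkhoff sums `β_n(ω) = ∑_{j<n} β(σ^j ω)` (two-sided). -/
def bSum2 (β : Seq2 → ℝ) (n : ℕ) (ω : Seq2) : ℝ :=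
  ∑ j ∈ Finset.range n, β (shift2^[j] ω)

/-- Birkhoff sums `β_n(ω) = ∑_{j<n} β(σ^j ω)` (one-sided). -/
def bSum1 (β : Seq1 → ℝ) (n : ℕ) (ω : Seq1) : ℝ :=
  ∑ j ∈ Finset.range n, β (shift1^[j] ω)

/-- Condition (WM_m): the equation `e^{imβ(ω)} A(σω) = ν A(ω)` has only the trivial
solution `ν = 1`, `A` constant, among not-identically-zero `θ`-Hölder functions. -/
def WM2 (θ : ℝ) (β : Seq2 → ℝ) (m : ℕ) : Prop :=
  ∀ (A : Seq2 → ℂ) (ν : ℂ), IsHolder2 θ A → (∃ ω, A ω ≠ 0) →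
    (∀ ω, Complex.exp (Complex.I * (m : ℂ) * (β ω : ℂ)) * A (shift2 ω) = ν * A ω) →
    ν = 1 ∧ ∀ ω ω', A ω = A ω'

/-- Condition (WM_m) for the one-sided shift. -/
def WM1 (θ : ℝ) (β : Seq1 → ℝ) (m : ℕ) : Prop :=
  ∀ (A : Seq1 → ℂ) (ν : ℂ), IsHolder1 θ A → (∃ ω, A ω ≠ 0) →
    (∀ ω, Complex.exp (Complex.I * (m : ℂ) * (β ω : ℂ)) * A (shift1 ω) = ν * A ω) →
    ν = 1 ∧ ∀ ω ω', A ω = A ω'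

/-- Observable in the class `E_{θ,m}` with Fourier coefficient `A`:
`F(ω,s) = A(ω) e^{ims} + conj(A(ω)) e^{-ims}` (a real-valued function viewed in `ℂ`). -/
def obs (m : ℕ) (A : Seq2 → ℂ) (ω : Seq2) (s : ℝ) : ℂ :=
  A ω * Complex.exp (Complex.I * (m : ℂ) * (s : ℂ)) +
    (starRingEnd ℂ) (A ω) * Complex.exp (-(Complex.I * (m : ℂ) * (s : ℂ)))

/-- Normalized Haar (Lebesgue) measure on `𝕋 = ℝ/2πℤ`, realized on the fundamental
domain `(0, 2π]` of the real line. -/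
def haarT : Measure ℝ :=
  (ENNReal.ofReal (2 * Real.pi))⁻¹ • (volume.restrict (Set.Ioc 0 (2 * Real.pi)))

/-- A function on the two-sided shift space depends only on the coordinates `k ≥ 0`. -/
def DependsOnNonneg {α : Type*} (f : Seq2 → α) : Prop :=
  ∀ ω ω' : Seq2, (∀ k : ℤ, 0 ≤ k → ω k = ω' k) → f ω = f ω'

/-- A function on the two-sided shift space depends only on the coordinates `k ≤ 0`. -/
def DependsOnNonpos {α : Type*} (f : Seq2 → α) : Prop :=
  ∀ ω ω' : Seq2, (∀ k : ℤ, k ≤ 0 → ω k = ω' k) → f ω = f ω'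

end

/-- Partial sum `S_n = Σ_{j=1}^n X_j`. -/
noncomputable def Sn (X : ℕ → Seq2 → ℝ) (n : ℕ) (ω : Seq2) : ℝ :=
  ∑ j ∈ Finset.Icc 1 n, X j ω

/-- Block length `p = ⌊n^τ⌋`. -/
noncomputable def blockP (τ : ℝ) (n : ℕ) : ℕ := Nat.floor ((n : ℝ) ^ τ)

/-- Gap length `q = ⌈(log n)²⌉`. -/
noncomputable def blockQ (n : ℕ) : ℕ := Nat.ceil (Real.log n ^ 2)

/-- Number of blocks `k = ⌊n/(p+q)⌋`. -/
noncomputable def blockK (τ : ℝ) (n : ℕ) : ℕ := n / (blockP τ n + blockQ n)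

/-- The `j`-th Bernstein block `ξ_j = Σ_{m=jp+jq+1}^{(j+1)p+jq} X_m`. -/
noncomputable def xiBlock (X : ℕ → Seq2 → ℝ) (τ : ℝ) (n j : ℕ) (ω : Seq2) : ℝ :=
  ∑ m ∈ Finset.Icc (j * blockP τ n + j * blockQ n + 1)
      ((j + 1) * blockP τ n + j * blockQ n), X m ω

/-- The block sum `S̃_n = Σ_{j=0}^{k-1} ξ_j`. -/
noncomputable def Stil (X : ℕ → Seq2 → ℝ) (τ : ℝ) (n : ℕ) (ω : Seq2) : ℝ :=
  ∑ j ∈ Finset.range (blockK τ n), xiBlock X τ n j ω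

/-- `σ_n = (∫ S_n² dμ)^{1/2}`. -/
noncomputable def sigman (μ : MeasureTheory.Measure Seq2) (X : ℕ → Seq2 → ℝ)
    (n : ℕ) : ℝ :=
  Real.sqrt (∫ ω, (Sn X n ω) ^ 2 ∂μ)

open Finset Asymptotics

theorem sum_pow_le_of_injOn {ι : Type*} {r : ℝ} (hr0 : 0 ≤ r) (hr1 : r < 1) {s : Finset ι}
    {g : ι → ℕ} {G : ℕ} (hg : Set.InjOn g s) (hG : ∀ x ∈ s, G ≤ g x) :
    ∑ x ∈ s, r ^ g x ≤ r ^ G / (1 - r) := by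
  have hinj : Set.InjOn (fun x => g x - G) s := fun x hx y hy hxy => by
    have := hG x hx; have := hG y hy; exact hg hx hy (by simp only at hxy; omega)
  calc ∑ x ∈ s, r ^ g x = r ^ G * ∑ d ∈ s.image (fun x => g x - G), r ^ d := by
        rw [sum_image hinj, mul_sum]
        exact sum_congr rfl fun x hx => by rw [← pow_add, Nat.add_sub_cancel' (hG x hx)]
    _ ≤ r ^ G * ∑' d, r ^ d := by
        gcongr
        exact (summable_geometric_of_lt_one hr0 hr1).sum_le_tsum _ fun d _ => pow_nonneg hr0 d
    _ = r ^ G / (1 - r) := by rw [tsum_geometric_of_lt_one hr0 hr1, div_eq_mul_inv]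

/-- Each distance is attained by at most two points, one on each side of `a`. -/
theorem sum_pow_dist_le {r : ℝ} (hr0 : 0 ≤ r) (hr1 : r < 1) (a : ℕ) {s : Finset ℕ} {G : ℕ}
    (hG : ∀ b ∈ s, G ≤ Nat.dist a b) : ∑ b ∈ s, r ^ Nat.dist a b ≤ 2 * r ^ G / (1 - r) := by
  rw [← sum_filter_add_sum_filter_not s (· ≤ a), two_mul, add_div]
  gcongr <;> refine sum_pow_le_of_injOn hr0 hr1 ?_ fun b hb => hG b (mem_filter.1 hb).1
  all_goals
    intro x hx y hy hxy
    simp only [coe_filter, Set.mem_ofPred_eq, Nat.dist] at hx hy hxy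
    omega

theorem sum_union_le_of_nonneg {ι : Type*} [DecidableEq ι] {s t : Finset ι} {f : ι → ℝ}
    (hf : ∀ i, 0 ≤ f i) : ∑ i ∈ s ∪ t, f i ≤ ∑ i ∈ s, f i + ∑ i ∈ t, f i := by
  rw [← sum_union_inter]
  exact le_add_of_nonneg_right (sum_nonneg fun i _ => hf i)

def ExpDecayOn (c : ℕ → ℕ → ℝ) (I : Finset ℕ) (C r : ℝ) : Prop :=
  ∀ a ∈ I, ∀ b ∈ I, |c a b| ≤ C * r ^ Nat.dist a b

namespace ExpDecayOn

variable {c : ℕ → ℕ → ℝ} {I : Finset ℕ} {C r : ℝ}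

theorem swap (hc : ExpDecayOn c I C r) : ExpDecayOn (fun a b => c b a) I C r :=
  fun a ha b hb => Nat.dist_comm a b ▸ hc b hb a ha

theorem sum_abs_le_of_le_dist (hc : ExpDecayOn c I C r) (hC : 0 ≤ C) (hr0 : 0 ≤ r) (hr1 : r < 1)
    {a : ℕ} (ha : a ∈ I) {s : Finset ℕ} (hs : s ⊆ I) {G : ℕ} (hG : ∀ b ∈ s, G ≤ Nat.dist a b) :
    ∑ b ∈ s, |c a b| ≤ 2 * C * r ^ G / (1 - r) :=
  calc ∑ b ∈ s, |c a b| ≤ ∑ b ∈ s, C * r ^ Nat.dist a b :=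
        sum_le_sum fun b hb => hc a ha b (hs hb)
    _ ≤ C * (2 * r ^ G / (1 - r)) := by
        rw [← mul_sum]; gcongr; exact sum_pow_dist_le hr0 hr1 a hG
    _ = 2 * C * r ^ G / (1 - r) := by ring

theorem sum_abs_le (hc : ExpDecayOn c I C r) (hC : 0 ≤ C) (hr0 : 0 ≤ r) (hr1 : r < 1)
    {a : ℕ} (ha : a ∈ I) {s : Finset ℕ} (hs : s ⊆ I) :
    ∑ b ∈ s, |c a b| ≤ 2 * C / (1 - r) := by
  simpa using hc.sum_abs_le_of_le_dist hC hr0 hr1 ha hs (G := 0) fun _ _ => Nat.zero_le _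

theorem abs_sum_sub_sum_le (hc : ExpDecayOn c I C r) (hC : 0 ≤ C) (hr0 : 0 ≤ r) (hr1 : r < 1)
    {Δ : Finset (ℕ × ℕ)} {D : Finset ℕ} {G : ℕ} (hΔ : Δ ⊆ I ×ˢ I) (hD : D ⊆ I)
    (hcover : ∀ x ∈ I ×ˢ I, x ∉ Δ → x.1 ∈ D ∨ x.2 ∈ D ∨ G ≤ Nat.dist x.1 x.2) :
    |∑ x ∈ I ×ˢ I, c x.1 x.2 - ∑ x ∈ Δ, c x.1 x.2| ≤
      2 * C / (1 - r) * (2 * #D + #I * r ^ G) := by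
  set far := (I ×ˢ I).filter fun x => G ≤ Nat.dist x.1 x.2
  have hsub : (I ×ˢ I) \ Δ ⊆ D ×ˢ I ∪ I ×ˢ D ∪ far := fun x hx => by
    obtain ⟨hxI, hxΔ⟩ := mem_sdiff.1 hx
    have hx' := mem_product.1 hxI
    rcases hcover x hxI hxΔ with h | h | h
    · exact mem_union_left _ (mem_union_left _ (mem_product.2 ⟨h, hx'.2⟩))
    · exact mem_union_left _ (mem_union_right _ (mem_product.2 ⟨hx'.1, h⟩))
    · exact mem_union_right _ (mem_filter.2 ⟨hxI, h⟩)
  have hrows : ∑ x ∈ D ×ˢ I, |c x.1 x.2| ≤ #D * (2 * C / (1 - r)) := by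
    rw [sum_product, ← nsmul_eq_mul]
    exact sum_le_card_nsmul _ _ _ fun a ha => hc.sum_abs_le hC hr0 hr1 (hD ha) subset_rfl
  have hcols : ∑ x ∈ I ×ˢ D, |c x.1 x.2| ≤ #D * (2 * C / (1 - r)) := by
    rw [sum_product_right, ← nsmul_eq_mul]
    exact sum_le_card_nsmul _ _ _ fun b hb => hc.swap.sum_abs_le hC hr0 hr1 (hD hb) subset_rfl
  have hfar : ∑ x ∈ far, |c x.1 x.2| ≤ #I * (2 * C * r ^ G / (1 - r)) := by
    rw [sum_filter, sum_product, ← nsmul_eq_mul]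
    refine sum_le_card_nsmul _ _ _ fun a ha => ?_
    rw [← sum_filter]
    exact hc.sum_abs_le_of_le_dist hC hr0 hr1 ha (filter_subset _ _) fun b hb => (mem_filter.1 hb).2
  calc |∑ x ∈ I ×ˢ I, c x.1 x.2 - ∑ x ∈ Δ, c x.1 x.2|
      = |∑ x ∈ (I ×ˢ I) \ Δ, c x.1 x.2| := by rw [sum_sdiff_eq_sub hΔ]
    _ ≤ ∑ x ∈ (I ×ˢ I) \ Δ, |c x.1 x.2| := abs_sum_le_sum_abs _ _
    _ ≤ ∑ x ∈ D ×ˢ I ∪ I ×ˢ D ∪ far, |c x.1 x.2| :=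
        sum_le_sum_of_subset_of_nonneg hsub fun _ _ _ => abs_nonneg _
    _ ≤ ∑ x ∈ D ×ˢ I, |c x.1 x.2| + ∑ x ∈ I ×ˢ D, |c x.1 x.2| + ∑ x ∈ far, |c x.1 x.2| :=
        (sum_union_le_of_nonneg fun _ => abs_nonneg _).trans
          (add_le_add_left (sum_union_le_of_nonneg fun _ => abs_nonneg _) _)
    _ ≤ 2 * C / (1 - r) * (2 * #D + #I * r ^ G) := by
        have : 2 * C * r ^ G / (1 - r) = 2 * C / (1 - r) * r ^ G := by ring
        rw [this] at hfar
        linarith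

end ExpDecayOn

namespace Bernstein

variable (p q : ℕ)

def block (j : ℕ) : Finset ℕ := Icc (j * p + j * q + 1) ((j + 1) * p + j * q)

def blockUnion (K : ℕ) : Finset ℕ := (range K).biUnion (block p q)

def blockPairs (K : ℕ) : Finset (ℕ × ℕ) := (range K).biUnion fun j => block p q j ×ˢ block p q j

variable {p q}

theorem add_lt_of_mem_block {i j a b : ℕ} (hij : i < j) (ha : a ∈ block p q i)
    (hb : b ∈ block p q j) : a + q < b := by
  simp only [block, mem_Icc] at ha hb
  have h1 : (i + 1) * p ≤ j * p := Nat.mul_le_mul_right p hij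
  have h2 : (i + 1) * q ≤ j * q := Nat.mul_le_mul_right q hij
  rw [add_mul, one_mul] at h2
  omega

theorem pairwise_disjoint_block : Pairwise (Function.onFun Disjoint (block p q)) := fun i j hij =>
  disjoint_left.2 fun a hi hj => by
    rcases hij.lt_or_gt with h | h
    · have := add_lt_of_mem_block h hi hj; omega
    · have := add_lt_of_mem_block h hj hi; omega

theorem card_block (j : ℕ) : #(block p q j) = p := by
  rw [block, Nat.card_Icc, add_mul, one_mul]
  omega

theorem block_subset_Icc {K n j : ℕ} (hK : K * (p + q) ≤ n) (hj : j < K) :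
    block p q j ⊆ Icc 1 n := fun a ha => by
  have : (j + 1) * (p + q) ≤ n := (Nat.mul_le_mul_right _ hj).trans hK
  simp only [block, mem_Icc, add_mul, mul_add, one_mul] at ha this ⊢
  omega

theorem blockUnion_subset_Icc {K n : ℕ} (hK : K * (p + q) ≤ n) : blockUnion p q K ⊆ Icc 1 n :=
  biUnion_subset.2 fun _ hj => block_subset_Icc hK (mem_range.1 hj)

theorem blockPairs_subset {K n : ℕ} (hK : K * (p + q) ≤ n) :
    blockPairs p q K ⊆ Icc 1 n ×ˢ Icc 1 n :=
  biUnion_subset.2 fun _ hj =>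
    have h := block_subset_Icc hK (mem_range.1 hj)
    product_subset_product h h

theorem card_Icc_sdiff_blockUnion {K n : ℕ} (hK : K * (p + q) ≤ n) :
    #(Icc 1 n \ blockUnion p q K) = n - K * p := by
  rw [card_sdiff_of_subset (blockUnion_subset_Icc hK), Nat.card_Icc, blockUnion,
    card_biUnion (Pairwise.set_pairwise pairwise_disjoint_block _)]
  simp [card_block]

theorem mem_or_mem_or_le_dist {K n : ℕ} {x : ℕ × ℕ} (hx : x ∈ Icc 1 n ×ˢ Icc 1 n)
    (hxΔ : x ∉ blockPairs p q K) :
    x.1 ∈ Icc 1 n \ blockUnion p q K ∨ x.2 ∈ Icc 1 n \ blockUnion p q K ∨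
      q ≤ Nat.dist x.1 x.2 := by
  obtain ⟨h1, h2⟩ := mem_product.1 hx
  by_cases hu1 : x.1 ∈ blockUnion p q K
  · by_cases hu2 : x.2 ∈ blockUnion p q K
    · right; right
      obtain ⟨i, hi, hai⟩ := mem_biUnion.1 hu1
      obtain ⟨j, -, hbj⟩ := mem_biUnion.1 hu2
      rcases lt_trichotomy i j with h | rfl | h
      · have := add_lt_of_mem_block h hai hbj; simp only [Nat.dist]; omega
      · exact absurd (mem_biUnion.2 ⟨i, hi, mem_product.2 ⟨hai, hbj⟩⟩) hxΔ
      · have := add_lt_of_mem_block h hbj hai; simp only [Nat.dist]; omega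
    · exact Or.inr (Or.inl (mem_sdiff.2 ⟨h2, hu2⟩))
  · exact Or.inl (mem_sdiff.2 ⟨h1, hu1⟩)

theorem abs_sum_sub_sum_blockPairs_le {c : ℕ → ℕ → ℝ} {C r : ℝ} {K n : ℕ}
    (hc : ExpDecayOn c (Icc 1 n) C r) (hC : 0 ≤ C) (hr0 : 0 ≤ r) (hr1 : r < 1)
    (hK : K * (p + q) ≤ n) :
    |∑ x ∈ Icc 1 n ×ˢ Icc 1 n, c x.1 x.2 - ∑ x ∈ blockPairs p q K, c x.1 x.2| ≤
      2 * C / (1 - r) * (2 * (n - K * p : ℕ) + n * r ^ q) := by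
  have h := hc.abs_sum_sub_sum_le hC hr0 hr1 (blockPairs_subset hK) sdiff_subset
    fun x hx hxΔ => mem_or_mem_or_le_dist hx hxΔ
  rwa [card_Icc_sdiff_blockUnion hK, Nat.card_Icc, Nat.add_sub_cancel] at h

end Bernstein

theorem integral_sum_mul_sum {Ω ι : Type*} [MeasurableSpace Ω] {μ : Measure Ω}
    {X : ι → Ω → ℝ} {s t : Finset ι}
    (hint : ∀ x ∈ s ×ˢ t, Integrable (fun ω => X x.1 ω * X x.2 ω) μ) :
    ∫ ω, (∑ a ∈ s, X a ω) * (∑ b ∈ t, X b ω) ∂μ = ∑ x ∈ s ×ˢ t, ∫ ω, X x.1 ω * X x.2 ω ∂μ := by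
  simp_rw [sum_mul_sum, ← sum_product' s t (fun a b => X a _ * X b _)]
  exact integral_finsetSum _ hint

theorem integrable_mul_of_abs_le {Ω : Type*} [MeasurableSpace Ω] {μ : Measure Ω}
    [IsFiniteMeasure μ] {f g : Ω → ℝ} {M : ℝ} (hf : Measurable f) (hg : Measurable g)
    (hfM : ∀ ω, |f ω| ≤ M) (hgM : ∀ ω, |g ω| ≤ M) : Integrable (fun ω => f ω * g ω) μ :=
  (Integrable.of_bound hg.aestronglyMeasurable M (ae_of_all _ hgM)).bdd_mul
    hf.aestronglyMeasurable (ae_of_all _ hfM)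

theorem expDecayOn_integral_mul {μ : Measure Seq2} {X : ℕ → Seq2 → ℝ} {C r : ℝ}
    (hcov : ∀ i j : ℕ, 1 ≤ i → i ≤ j → |∫ ω, X i ω * X j ω ∂μ| ≤ C * r ^ (j - i)) (n : ℕ) :
    ExpDecayOn (fun a b => ∫ ω, X a ω * X b ω ∂μ) (Icc 1 n) C r := by
  intro a ha b hb
  rcases le_total a b with h | h
  · rw [Nat.dist_eq_sub_of_le h]
    exact hcov a b (mem_Icc.1 ha).1 h
  · rw [Nat.dist_eq_sub_of_le_right h]
    simp_rw [mul_comm (X a _)]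
    exact hcov b a (mem_Icc.1 hb).1 h

theorem integral_sq_Sn {μ : Measure Seq2} {X : ℕ → Seq2 → ℝ} {n : ℕ}
    (hint : ∀ x ∈ Icc 1 n ×ˢ Icc 1 n, Integrable (fun ω => X x.1 ω * X x.2 ω) μ) :
    ∫ ω, (Sn X n ω) ^ 2 ∂μ = ∑ x ∈ Icc 1 n ×ˢ Icc 1 n, ∫ ω, X x.1 ω * X x.2 ω ∂μ := by
  simp_rw [sq, Sn]
  exact integral_sum_mul_sum hint

theorem sum_integral_sq_xiBlock {μ : Measure Seq2} {X : ℕ → Seq2 → ℝ} {τ : ℝ} {n : ℕ}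
    (hint : ∀ x ∈ Bernstein.blockPairs (blockP τ n) (blockQ n) (blockK τ n),
      Integrable (fun ω => X x.1 ω * X x.2 ω) μ) :
    ∑ j ∈ range (blockK τ n), ∫ ω, (xiBlock X τ n j ω) ^ 2 ∂μ =
      ∑ x ∈ Bernstein.blockPairs (blockP τ n) (blockQ n) (blockK τ n),
        ∫ ω, X x.1 ω * X x.2 ω ∂μ := by
  rw [Bernstein.blockPairs, sum_biUnion fun i _ j _ hij =>
    disjoint_product.2 (Or.inl (Bernstein.pairwise_disjoint_block hij))]
  refine sum_congr rfl fun j hj => ?_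
  simp_rw [sq]
  exact integral_sum_mul_sum fun x hx => hint x (mem_biUnion.2 ⟨j, hj, hx⟩)

theorem isLittleO_card_gaps {p q : ℕ → ℕ} (hp : Tendsto p atTop atTop)
    (hpn : (fun n => (p n : ℝ)) =o[atTop] fun n => (n : ℝ))
    (hqp : (fun n => (q n : ℝ)) =o[atTop] fun n => (p n : ℝ)) :
    (fun n => ((n - n / (p n + q n) * p n : ℕ) : ℝ)) =o[atTop] fun n => (n : ℝ) := by
  set K := fun n => n / (p n + q n)
  have hKq : (fun n => (K n * q n : ℝ)) =o[atTop] fun n => (n : ℝ) := by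
    refine isLittleO_iff.2 fun ε hε => (hqp.def hε).mono fun n hn => ?_
    simp only [norm_mul, Real.norm_natCast] at hn ⊢
    have hKp : (K n * p n : ℝ) ≤ n := by
      exact_mod_cast (Nat.mul_le_mul_left _ (Nat.le_add_right _ _)).trans (Nat.div_mul_le_self n _)
    calc (K n * q n : ℝ) ≤ K n * (ε * p n) := by gcongr
      _ = ε * (K n * p n) := by ring
      _ ≤ ε * n := by gcongr
  have hbound : ∀ᶠ n in atTop, ((n - K n * p n : ℕ) : ℝ) ≤ p n + q n + K n * q n := by
    filter_upwards [hp.eventually_gt_atTop 0] with n hpn0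
    have hlt : n < K n * (p n + q n) + (p n + q n) := Nat.lt_div_mul_add (by omega)
    rw [mul_add] at hlt
    exact_mod_cast (by omega : n - K n * p n ≤ p n + q n + K n * q n)
  refine IsBigO.trans_isLittleO (g := fun n => (p n + q n + K n * q n : ℝ)) ?_
    ((hpn.add (hqp.trans hpn)).add hKq)
  refine IsBigO.of_bound 1 (hbound.mono fun n hn => ?_)
  rw [Real.norm_natCast, one_mul, Real.norm_of_nonneg (by positivity)]
  exact hn

theorem isLittleO_rpow_self_atTop {τ : ℝ} (hτ : τ < 1) :
    (fun x : ℝ => x ^ τ) =o[atTop] fun x => x := by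
  refine (isLittleO_iff_tendsto' ((eventually_gt_atTop 0).mono fun x hx h => ?_)).2 ?_
  · exact absurd h hx.ne'
  · refine (tendsto_rpow_neg_atTop (sub_pos.2 hτ)).congr'
      ((eventually_gt_atTop 0).mono fun x hx => ?_)
    rw [neg_sub, Real.rpow_sub_one hx.ne']

theorem tendsto_blockP_atTop {τ : ℝ} (hτ : 0 < τ) : Tendsto (blockP τ) atTop atTop :=
  tendsto_nat_floor_atTop.comp ((tendsto_rpow_atTop hτ).comp tendsto_natCast_atTop_atTop)

theorem tendsto_blockQ_atTop : Tendsto blockQ atTop atTop :=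
  tendsto_nat_ceil_atTop.comp
    ((tendsto_pow_atTop two_ne_zero).comp (Real.tendsto_log_atTop.comp tendsto_natCast_atTop_atTop))

theorem isLittleO_blockP {τ : ℝ} (hτ : τ < 1) :
    (fun n => (blockP τ n : ℝ)) =o[atTop] fun n => (n : ℝ) := by
  have hfloor : (fun x : ℝ => (⌊x ^ τ⌋₊ : ℝ)) =O[atTop] fun x => x ^ τ :=
    IsBigO.of_bound 1 ((eventually_ge_atTop 0).mono fun x hx => by
      rw [one_mul, Real.norm_natCast, Real.norm_of_nonneg (by positivity)]
      exact Nat.floor_le (by positivity))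
  exact (hfloor.trans_isLittleO (isLittleO_rpow_self_atTop hτ)).comp_tendsto
    tendsto_natCast_atTop_atTop

theorem isLittleO_blockQ_blockP {τ : ℝ} (hτ : 0 < τ) :
    (fun n => (blockQ n : ℝ)) =o[atTop] fun n => (blockP τ n : ℝ) := by
  have hceil : (fun x : ℝ => (⌈Real.log x ^ 2⌉₊ : ℝ)) ~[atTop] fun x => Real.log x ^ 2 :=
    (isEquivalent_of_tendsto_one tendsto_nat_ceil_div_atTop).comp_tendsto
      ((tendsto_pow_atTop two_ne_zero).comp Real.tendsto_log_atTop)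
  have hfloor : (fun x : ℝ => (⌊x ^ τ⌋₊ : ℝ)) ~[atTop] fun x => x ^ τ :=
    (isEquivalent_of_tendsto_one tendsto_nat_floor_div_atTop).comp_tendsto (tendsto_rpow_atTop hτ)
  have hlog : (fun x : ℝ => Real.log x ^ 2) =o[atTop] fun x => x ^ τ := by
    simpa only [Real.rpow_two] using isLittleO_log_rpow_rpow_atTop 2 hτ
  exact ((hceil.isBigO.trans_isLittleO hlog).trans_isBigO hfloor.isBigO_symm).comp_tendsto
    tendsto_natCast_atTop_atTop

theorem abs_div_sub_one_le {x y b m : ℝ} (hm : 0 < m) (hmy : m ≤ y) (h : |y - x| ≤ b) :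
    |x / y - 1| ≤ b / m := by
  rw [div_sub_one (hm.trans_le hmy).ne', abs_div, abs_of_pos (hm.trans_le hmy), abs_sub_comm]
  exact div_le_div₀ ((abs_nonneg _).trans h) h hm hmy

theorem statement17_general
    (μ : Measure Seq2) (hμ : IsBernoulli2 μ)
    (X : ℕ → Seq2 → ℝ) (hmeas : ∀ j, Measurable (X j))
    (M : ℝ) (hbd : ∀ j : ℕ, 1 ≤ j → ∀ ω, |X j ω| ≤ M)
    (C₀ : ℝ) (hC₀ : 0 < C₀) (r₀ : ℝ) (hr₀ : r₀ ∈ Set.Ioo (0 : ℝ) 1)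
    (hcov : ∀ i j : ℕ, 1 ≤ i → i ≤ j →
      |∫ ω, X i ω * X j ω ∂μ| ≤ C₀ * r₀ ^ (j - i))
    (σm : ℝ) (hσm : 0 < σm)
    (hvar : ∀ᶠ n : ℕ in atTop, σm ^ 2 * n ≤ ∫ ω, (Sn X n ω) ^ 2 ∂μ)
    (τ : ℝ) (hτ : τ ∈ Set.Ioo (0 : ℝ) 1) :
    Tendsto
      (fun n : ℕ =>
        (∑ j ∈ Finset.range (blockK τ n), ∫ ω, (xiBlock X τ n j ω) ^ 2 ∂μ) /
          ∫ ω, (Sn X n ω) ^ 2 ∂μ)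
      atTop (𝓝 1) := by
  have := hμ.1
  obtain ⟨hr0, hr1⟩ := hr₀
  have hint : ∀ n, ∀ x ∈ Icc 1 n ×ˢ Icc 1 n, Integrable (fun ω => X x.1 ω * X x.2 ω) μ :=
    fun _ x hx => integrable_mul_of_abs_le (hmeas _) (hmeas _)
      (hbd _ (mem_Icc.1 (mem_product.1 hx).1).1) (hbd _ (mem_Icc.1 (mem_product.1 hx).2).1)
  have herr : Tendsto (fun n : ℕ => 2 * C₀ / (1 - r₀) *
      (2 * ((n - blockK τ n * blockP τ n : ℕ) : ℝ) + n * r₀ ^ blockQ n) / (σm ^ 2 * n))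
      atTop (𝓝 0) := by
    have hgaps := (isLittleO_card_gaps (tendsto_blockP_atTop hτ.1) (isLittleO_blockP hτ.2)
      (isLittleO_blockQ_blockP hτ.1)).tendsto_div_nhds_zero
    have hrq := (tendsto_pow_atTop_nhds_zero_of_lt_one hr0.le hr1).comp tendsto_blockQ_atTop
    have := ((hgaps.const_mul 2).add hrq).const_mul (2 * C₀ / (1 - r₀) / σm ^ 2)
    rw [mul_zero, add_zero, mul_zero] at this
    refine this.congr' ((eventually_gt_atTop 0).mono fun n hn => ?_)
    simp only [Function.comp_apply, blockK]
    field_simp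
  rw [tendsto_iff_norm_sub_tendsto_zero]
  refine squeeze_zero' (.of_forall fun _ => norm_nonneg _) ?_ herr
  filter_upwards [hvar, eventually_gt_atTop 0] with n hvarn hn
  have hK : blockK τ n * (blockP τ n + blockQ n) ≤ n := Nat.div_mul_le_self _ _
  rw [integral_sq_Sn (hint n)] at hvarn ⊢
  rw [sum_integral_sq_xiBlock fun x hx => hint n x (Bernstein.blockPairs_subset hK hx),
    Real.norm_eq_abs]
  exact abs_div_sub_one_le (by positivity) hvarn (Bernstein.abs_sum_sub_sum_blockPairs_le
    (expDecayOn_integral_mul hcov n) hC₀.le hr0.le hr1 hK)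

/-- Bernstein block method, step 3: the sum of the variances of the
blocks `ξ_j` is asymptotically equal to the total variance `σ_n²`. -/
theorem statement17
    (μ : Measure Seq2) (hμ : IsBernoulli2 μ)
    (X : ℕ → Seq2 → ℝ) (hmeas : ∀ j, Measurable (X j))
    (M : ℝ) (hM : 0 < M) (hbd : ∀ j : ℕ, 1 ≤ j → ∀ ω, |X j ω| ≤ M)
    (hmean : ∀ j : ℕ, 1 ≤ j → (∫ ω, X j ω ∂μ) = 0)
    (C₀ : ℝ) (hC₀ : 0 < C₀) (r₀ : ℝ) (hr₀ : r₀ ∈ Set.Ioo (0 : ℝ) 1)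
    (hcov : ∀ i j : ℕ, 1 ≤ i → i ≤ j →
      |∫ ω, X i ω * X j ω ∂μ| ≤ C₀ * r₀ ^ (j - i))
    (σm : ℝ) (hσm : 0 < σm)
    (hvar : ∀ᶠ n : ℕ in atTop, σm ^ 2 * n ≤ ∫ ω, (Sn X n ω) ^ 2 ∂μ)
    (τ : ℝ) (hτ : τ ∈ Set.Ioo (0 : ℝ) 1) :
    Tendsto
      (fun n : ℕ =>
        (∑ j ∈ Finset.range (blockK τ n), ∫ ω, (xiBlock X τ n j ω) ^ 2 ∂μ) /
          ∫ ω, (Sn X n ω) ^ 2 ∂μ)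
      atTop (𝓝 1) :=
  statement17_general μ hμ X hmeas M hbd C₀ hC₀ r₀ hr₀ hcov σm hσm hvar τ hτ
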